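/- Let g₁, g₂ : Ω → 𝔻 be nowhere-holomorphic C² functions on a simply connected open domain Ω ⊆ ℂ satisfying (CP) and (Ge1), let f := −2i·conj(F), φ := f·(1 + g₁g₂, i(1 − g₁g₂), g₁ − g₂, −i(g₁ + g₂)), and let X : Ω → ℝ⁴ satisfy X_z = φ, with Λ² := 4|f|²(1+|g₁|²)(1+|g₂|²). Then the mean curvature vector H := (4/Λ²)·X_{zz̄} of the conformal immersion X equals the component of the constant vector −e₄ = (0,0,0,−1) orthogonal to the tangent plane: H = −e₄ + (1/Λ²)[⟨X_u, e₄⟩·X_u + ⟨X_v, e₄⟩·X_v] at every point of Ω. In particular, the image surface is a translating soliton of the mean curvature flow with translating velocity −e₄. -/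

import Mathlib

open Complex ComplexConjugate

/-- Wirtinger derivative `∂h/∂z = ½(∂h/∂u − i ∂h/∂v)` of a map `h : ℂ → ℂ`. -/
noncomputable def wz (h : ℂ → ℂ) (z : ℂ) : ℂ :=
  (1 / 2) * (fderiv ℝ h z 1 - Complex.I * fderiv ℝ h z Complex.I)

/-- Wirtinger derivative `∂h/∂z̄ = ½(∂h/∂u + i ∂h/∂v)` of a map `h : ℂ → ℂ`. -/
noncomputable def wzb (h : ℂ → ℂ) (z : ℂ) : ℂ :=
  (1 / 2) * (fderiv ℝ h z 1 + Complex.I * fderiv ℝ h z Complex.I)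

/-- Wirtinger derivative `∂x/∂z` of a real-valued map `x : ℂ → ℝ`. -/
noncomputable def wzR (x : ℂ → ℝ) (z : ℂ) : ℂ :=
  (1 / 2) * (((fderiv ℝ x z 1 : ℝ) : ℂ) - Complex.I * ((fderiv ℝ x z Complex.I : ℝ) : ℂ))

/-- The function `F` appearing in the compatibility condition (CP). -/
noncomputable def Ffun (g₁ g₂ : ℂ → ℂ) (z : ℂ) : ℂ :=
  wzb g₁ z / ((1 - g₁ z * conj (g₂ z)) * (1 + (Complex.normSq (g₁ z) : ℂ)))

/-- The compatibility condition (CP) at a point `z`. -/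
def CP (g₁ g₂ : ℂ → ℂ) (z : ℂ) : Prop :=
  Ffun g₁ g₂ z = wzb g₂ z / ((1 - conj (g₁ z) * g₂ z) * (1 + (Complex.normSq (g₂ z) : ℂ)))

/-- The integrability condition (Ge1) at a point `z`. -/
def Ge1 (g₁ g₂ : ℂ → ℂ) (z : ℂ) : Prop :=
  0 = wz (wzb g₁) z
      + (conj (g₂ z) / (1 - g₁ z * conj (g₂ z))
          - conj (g₁ z) / (1 + (Complex.normSq (g₁ z) : ℂ))) * wz g₁ z * wzb g₁ z
      + ((g₁ z + g₂ z) / ((1 - conj (g₁ z) * g₂ z) * (1 + (Complex.normSq (g₁ z) : ℂ))))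
          * (Complex.normSq (wzb g₁ z) : ℂ)

/-- The integrability condition (Ge2) at a point `z`. -/
def Ge2 (g₁ g₂ : ℂ → ℂ) (z : ℂ) : Prop :=
  0 = wz (wzb g₂) z
      + (conj (g₁ z) / (1 - conj (g₁ z) * g₂ z)
          - conj (g₂ z) / (1 + (Complex.normSq (g₂ z) : ℂ))) * wz g₂ z * wzb g₂ z
      + ((g₁ z + g₂ z) / ((1 - g₁ z * conj (g₂ z)) * (1 + (Complex.normSq (g₂ z) : ℂ))))
          * (Complex.normSq (wzb g₂ z) : ℂ)

/-- The function `f := −2i·conj(F)`. -/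
noncomputable def ffun (g₁ g₂ : ℂ → ℂ) (z : ℂ) : ℂ :=
  -2 * Complex.I * conj (Ffun g₁ g₂ z)

/-- The null curve `φ = f·(1 + g₁g₂, i(1 − g₁g₂), g₁ − g₂, −i(g₁ + g₂))`. -/
noncomputable def phi (g₁ g₂ : ℂ → ℂ) (z : ℂ) : Fin 4 → ℂ :=
  ![ffun g₁ g₂ z * (1 + g₁ z * g₂ z),
    ffun g₁ g₂ z * (Complex.I * (1 - g₁ z * g₂ z)),
    ffun g₁ g₂ z * (g₁ z - g₂ z),
    ffun g₁ g₂ z * (-Complex.I * (g₁ z + g₂ z))]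

/-- The conformal factor `Λ² = 4|f|²(1 + |g₁|²)(1 + |g₂|²)`. -/
noncomputable def lamSq (g₁ g₂ : ℂ → ℂ) (z : ℂ) : ℝ :=
  4 * Complex.normSq (ffun g₁ g₂ z) * (1 + Complex.normSq (g₁ z)) * (1 + Complex.normSq (g₂ z))

/-! Differentiating `(g₁)_z̄ = F·(1 − g₁ḡ₂)(1 + |g₁|²)` in `z` and eliminating `(g₁)_{zz̄}` by (Ge1)
and `(g₂)_z̄ = F·(1 − ḡ₁g₂)(1 + |g₂|²)` by (CP), the `(g₁)_z` terms cancel and one is left with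
`F_z = |F|²(g₁(|g₂|² − 1) + g₂(|g₁|² − 1))`. As `f = −2iF̄`, this determines `f_z̄`, so
`X_{zz̄} = φ_z̄` is a polynomial in `g₁, g₂, F` and their conjugates, and the translator equation
`4X_{zz̄} = −Λ²e₄ + 2(φ₃φ̄ + φ̄₃φ)` becomes a polynomial identity. Since `X_u = 2 Re φ` and
`X_v = −2 Im φ`, the last term is `⟨X_u, e₄⟩X_u + ⟨X_v, e₄⟩X_v`. -/

open Filter Topology

section Wirtinger

variable {h k : ℂ → ℂ} {z : ℂ}

@[fun_prop]
theorem DifferentiableAt.conj (hh : DifferentiableAt ℝ h z) :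
    DifferentiableAt ℝ (fun w => conj (h w)) z :=
  hh.star

@[fun_prop]
theorem DifferentiableAt.ofReal_normSq (hh : DifferentiableAt ℝ h z) :
    DifferentiableAt ℝ (fun w => (normSq (h w) : ℂ)) z := by
  simp only [← mul_conj]
  fun_prop

theorem Filter.EventuallyEq.wz_eq (he : h =ᶠ[𝓝 z] k) : wz h z = wz k z := by
  simp only [wz, he.fderiv_eq]

theorem Filter.EventuallyEq.wzb_eq (he : h =ᶠ[𝓝 z] k) : wzb h z = wzb k z := by
  simp only [wzb, he.fderiv_eq]

@[simp]
theorem wz_const (c : ℂ) : wz (fun _ => c) z = 0 := by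
  simp [wz]

@[simp]
theorem wzb_const (c : ℂ) : wzb (fun _ => c) z = 0 := by
  simp [wzb]

theorem wz_add (hh : DifferentiableAt ℝ h z) (hk : DifferentiableAt ℝ k z) :
    wz (fun w => h w + k w) z = wz h z + wz k z := by
  simp only [wz, fderiv_fun_add hh hk, add_apply]; ring

theorem wzb_add (hh : DifferentiableAt ℝ h z) (hk : DifferentiableAt ℝ k z) :
    wzb (fun w => h w + k w) z = wzb h z + wzb k z := by
  simp only [wzb, fderiv_fun_add hh hk, add_apply]; ring

theorem wz_sub (hh : DifferentiableAt ℝ h z) (hk : DifferentiableAt ℝ k z) :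
    wz (fun w => h w - k w) z = wz h z - wz k z := by
  simp only [wz, fderiv_fun_sub hh hk, sub_apply]; ring

theorem wzb_sub (hh : DifferentiableAt ℝ h z) (hk : DifferentiableAt ℝ k z) :
    wzb (fun w => h w - k w) z = wzb h z - wzb k z := by
  simp only [wzb, fderiv_fun_sub hh hk, sub_apply]; ring

theorem wz_mul (hh : DifferentiableAt ℝ h z) (hk : DifferentiableAt ℝ k z) :
    wz (fun w => h w * k w) z = wz h z * k z + h z * wz k z := by
  simp only [wz, fderiv_fun_mul hh hk, add_apply, smul_apply, smul_eq_mul]; ring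

theorem wzb_mul (hh : DifferentiableAt ℝ h z) (hk : DifferentiableAt ℝ k z) :
    wzb (fun w => h w * k w) z = wzb h z * k z + h z * wzb k z := by
  simp only [wzb, fderiv_fun_mul hh hk, add_apply, smul_apply, smul_eq_mul]; ring

theorem fderiv_conj_apply (v : ℂ) :
    fderiv ℝ (fun w => conj (h w)) z v = conj (fderiv ℝ h z v) := by
  change fderiv ℝ (fun w => star (h w)) z v = _
  rw [fderiv_star]
  rfl

theorem wz_conj : wz (fun w => conj (h w)) z = conj (wzb h z) := by
  simp only [wz, wzb, fderiv_conj_apply, map_mul, map_add, map_div₀, map_one, map_ofNat,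
    conj_I]; ring

theorem wzb_conj : wzb (fun w => conj (h w)) z = conj (wz h z) := by
  simp only [wz, wzb, fderiv_conj_apply, map_mul, map_sub, map_div₀, map_one, map_ofNat,
    conj_I]; ring

theorem wz_normSq (hh : DifferentiableAt ℝ h z) :
    wz (fun w => (normSq (h w) : ℂ)) z = wz h z * conj (h z) + h z * conj (wzb h z) := by
  simp only [← mul_conj]
  rw [wz_mul (k := fun w => conj (h w)) hh hh.conj, wz_conj]

theorem ContDiffAt.differentiableAt_wzb (hh : ContDiffAt ℝ 2 h z) :
    DifferentiableAt ℝ (wzb h) z := by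
  have hd : DifferentiableAt ℝ (fderiv ℝ h) z :=
    (hh.fderiv_right (m := 1) (by norm_num)).differentiableAt (by norm_num)
  unfold wzb
  fun_prop

theorem ofReal_fderiv_mul_add_eq_wzR (x y : ℂ → ℝ) :
    ((fderiv ℝ x z 1 * fderiv ℝ y z 1 + fderiv ℝ x z I * fderiv ℝ y z I : ℝ) : ℂ) =
      2 * (wzR x z * conj (wzR y z) + conj (wzR x z) * wzR y z) := by
  simp only [wzR, map_mul, map_sub, map_div₀, map_one, map_ofNat, conj_ofReal, conj_I]
  push_cast
  ring_nf
  simp only [I_sq]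
  ring

end Wirtinger

theorem one_sub_mul_conj_ne_zero {a b : ℂ} (ha : ‖a‖ < 1) (hb : ‖b‖ < 1) :
    1 - a * conj b ≠ 0 := by
  refine sub_ne_zero.2 fun h => ?_
  have : ‖a * conj b‖ < 1 := by
    rw [norm_mul, norm_conj]
    exact mul_lt_one_of_nonneg_of_lt_one_left (norm_nonneg a) ha hb.le
  rw [← h, norm_one] at this
  exact lt_irrefl 1 this

theorem one_sub_conj_mul_ne_zero {a b : ℂ} (h : 1 - a * conj b ≠ 0) : 1 - conj a * b ≠ 0 := by
  simpa [mul_comm] using (map_ne_zero (starRingEnd ℂ)).2 h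

theorem one_add_normSq_pos (a : ℂ) : 0 < 1 + normSq a :=
  add_pos_of_pos_of_nonneg one_pos (normSq_nonneg a)

theorem one_add_normSq_ne_zero (a : ℂ) : 1 + (normSq a : ℂ) ≠ 0 := by
  exact_mod_cast (one_add_normSq_pos a).ne'

def weierstrassVec (a b : ℂ) : Fin 4 → ℂ :=
  ![1 + a * b, I * (1 - a * b), a - b, -I * (a + b)]

section WeierstrassData

variable {g₁ g₂ : ℂ → ℂ} {z : ℂ}

theorem wzb_eq_Ffun_mul (hD : 1 - g₁ z * conj (g₂ z) ≠ 0) :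
    wzb g₁ z = Ffun g₁ g₂ z * ((1 - g₁ z * conj (g₂ z)) * (1 + normSq (g₁ z))) := by
  rw [Ffun, div_mul_cancel₀ _ (mul_ne_zero hD (one_add_normSq_ne_zero _))]

theorem CP.wzb_eq_Ffun_mul (hCP : CP g₁ g₂ z) (hD : 1 - g₁ z * conj (g₂ z) ≠ 0) :
    wzb g₂ z = Ffun g₁ g₂ z * ((1 - conj (g₁ z) * g₂ z) * (1 + normSq (g₂ z))) := by
  rw [hCP, div_mul_cancel₀ _ (mul_ne_zero (one_sub_conj_mul_ne_zero hD) (one_add_normSq_ne_zero _))]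

theorem wzb_eventuallyEq_Ffun_mul (hg₁ : ContinuousAt g₁ z) (hg₂ : ContinuousAt g₂ z)
    (hD : 1 - g₁ z * conj (g₂ z) ≠ 0) :
    wzb g₁ =ᶠ[𝓝 z]
      fun w => Ffun g₁ g₂ w * ((1 - g₁ w * conj (g₂ w)) * (1 + normSq (g₁ w))) := by
  have hcont : ContinuousAt (fun w => 1 - g₁ w * conj (g₂ w)) z := by fun_prop
  filter_upwards [hcont.eventually_ne hD] with w hw
  exact wzb_eq_Ffun_mul hw

theorem differentiableAt_Ffun (hg₁ : ContDiffAt ℝ 2 g₁ z) (hg₂ : DifferentiableAt ℝ g₂ z)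
    (hD : 1 - g₁ z * conj (g₂ z) ≠ 0) : DifferentiableAt ℝ (Ffun g₁ g₂) z := by
  have hg₁' : DifferentiableAt ℝ g₁ z := hg₁.differentiableAt (by norm_num)
  rw [show Ffun g₁ g₂ = fun w =>
      wzb g₁ w * ((1 - g₁ w * conj (g₂ w)) * (1 + (normSq (g₁ w) : ℂ)))⁻¹
    from funext fun w => div_eq_mul_inv _ _]
  exact hg₁.differentiableAt_wzb.mul
    (DifferentiableAt.fun_inv (by fun_prop) (mul_ne_zero hD (one_add_normSq_ne_zero _)))

theorem wz_Ffun (hg₁ : ContDiffAt ℝ 2 g₁ z) (hg₂ : DifferentiableAt ℝ g₂ z)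
    (hD : 1 - g₁ z * conj (g₂ z) ≠ 0) (hCP : CP g₁ g₂ z) (hGe1 : Ge1 g₁ g₂ z) :
    wz (Ffun g₁ g₂) z = Ffun g₁ g₂ z * conj (Ffun g₁ g₂ z) *
      (g₁ z * (normSq (g₂ z) - 1) + g₂ z * (normSq (g₁ z) - 1)) := by
  have hg₁' : DifferentiableAt ℝ g₁ z := hg₁.differentiableAt (by norm_num)
  have hwz : wz (wzb g₁) z =
      wz (Ffun g₁ g₂) z * ((1 - g₁ z * conj (g₂ z)) * (1 + normSq (g₁ z))) +
        Ffun g₁ g₂ z * (-(wz g₁ z * conj (g₂ z) + g₁ z * conj (wzb g₂ z)) * (1 + normSq (g₁ z)) +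
          (1 - g₁ z * conj (g₂ z)) * (wz g₁ z * conj (g₁ z) + g₁ z * conj (wzb g₁ z))) := by
    rw [(wzb_eventuallyEq_Ffun_mul hg₁'.continuousAt hg₂.continuousAt hD).wz_eq,
      wz_mul (differentiableAt_Ffun hg₁ hg₂ hD) (by fun_prop), wz_mul (by fun_prop) (by fun_prop),
      wz_sub (by fun_prop) (by fun_prop), wz_add (by fun_prop) (by fun_prop),
      wz_mul hg₁' hg₂.conj, wz_conj, wz_normSq hg₁', wz_const]
    ring
  have hA := wzb_eq_Ffun_mul (g₂ := g₂) hD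
  have hB := hCP.wzb_eq_Ffun_mul hD
  have hD' := one_sub_conj_mul_ne_zero hD
  have hN := one_add_normSq_ne_zero (g₁ z)
  unfold Ge1 at hGe1
  simp only [← mul_conj] at hGe1 hwz hA hB hN ⊢
  rw [hwz, hA, hB] at hGe1
  simp only [map_mul, map_sub, map_add, map_one, conj_conj] at hGe1
  field_simp at hGe1
  apply mul_left_cancel₀ (mul_ne_zero hD hN)
  linear_combination -hGe1

theorem wzb_ffun (hg₁ : ContDiffAt ℝ 2 g₁ z) (hg₂ : DifferentiableAt ℝ g₂ z)
    (hD : 1 - g₁ z * conj (g₂ z) ≠ 0) :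
    wzb (ffun g₁ g₂) z = -2 * I * conj (wz (Ffun g₁ g₂) z) := by
  rw [show ffun g₁ g₂ = fun w => -2 * I * conj (Ffun g₁ g₂ w) from rfl,
    wzb_mul (differentiableAt_const _) (differentiableAt_Ffun hg₁ hg₂ hD).conj, wzb_const,
    wzb_conj]
  ring

theorem lamSq_ne_zero (hD : 1 - g₁ z * conj (g₂ z) ≠ 0) (hnh : wzb g₁ z ≠ 0) :
    lamSq g₁ g₂ z ≠ 0 := by
  have hF : Ffun g₁ g₂ z ≠ 0 := fun h => hnh (by rw [wzb_eq_Ffun_mul hD, h, zero_mul])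
  have hf : ffun g₁ g₂ z ≠ 0 := by simp [ffun, hF]
  exact (mul_pos (mul_pos (mul_pos four_pos (normSq_pos.2 hf)) (one_add_normSq_pos _))
    (one_add_normSq_pos _)).ne'

theorem phi_apply (k : Fin 4) :
    phi g₁ g₂ z k = ffun g₁ g₂ z * weierstrassVec (g₁ z) (g₂ z) k := by
  fin_cases k <;> rfl

theorem wzb_weierstrassVec (hg₁ : DifferentiableAt ℝ g₁ z) (hg₂ : DifferentiableAt ℝ g₂ z)
    (k : Fin 4) :
    wzb (fun w => weierstrassVec (g₁ w) (g₂ w) k) z =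
      ![g₂ z, -I * g₂ z, 1, -I] k * wzb g₁ z + ![g₁ z, -I * g₁ z, -1, -I] k * wzb g₂ z := by
  fin_cases k <;>
    simp (disch := fun_prop) only [weierstrassVec, Fin.zero_eta, Fin.mk_one, Fin.reduceFinMk,
      Matrix.cons_val, wzb_add, wzb_sub, wzb_mul, wzb_const] <;> ring

theorem four_mul_wzb_phi (hg₁ : ContDiffAt ℝ 2 g₁ z) (hg₂ : DifferentiableAt ℝ g₂ z)
    (hD : 1 - g₁ z * conj (g₂ z) ≠ 0) (hCP : CP g₁ g₂ z) (hGe1 : Ge1 g₁ g₂ z) (k : Fin 4) :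
    4 * wzb (fun w => phi g₁ g₂ w k) z =
      -(if k = 3 then (lamSq g₁ g₂ z : ℂ) else 0) +
        2 * (phi g₁ g₂ z 3 * conj (phi g₁ g₂ z k) + conj (phi g₁ g₂ z 3) * phi g₁ g₂ z k) := by
  have hg₁' : DifferentiableAt ℝ g₁ z := hg₁.differentiableAt (by norm_num)
  have hf : DifferentiableAt ℝ (ffun g₁ g₂) z :=
    (differentiableAt_Ffun hg₁ hg₂ hD).conj.const_mul _
  have hψ : DifferentiableAt ℝ (fun w => weierstrassVec (g₁ w) (g₂ w) k) z := by
    fin_cases k <;>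
      simp only [weierstrassVec, Fin.zero_eta, Fin.mk_one, Fin.reduceFinMk, Matrix.cons_val] <;>
      fun_prop
  simp only [phi_apply]
  rw [wzb_mul hf hψ, wzb_weierstrassVec hg₁' hg₂, wzb_ffun hg₁ hg₂ hD,
    wz_Ffun hg₁ hg₂ hD hCP hGe1, wzb_eq_Ffun_mul hD, hCP.wzb_eq_Ffun_mul hD]
  unfold lamSq
  simp only [ffun, ← mul_conj, map_mul, map_sub, map_add, map_neg, map_one, map_ofNat, conj_I,
    conj_conj, ofReal_mul, ofReal_add, ofReal_one, ofReal_ofNat]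
  fin_cases k <;>
    simp only [weierstrassVec, Fin.zero_eta, Fin.mk_one, Fin.reduceFinMk, Fin.isValue,
      Matrix.cons_val, Fin.reduceEq, ↓reduceIte, map_add, map_sub, map_mul, map_neg, map_one,
      conj_I] <;>
    ring_nf <;> simp only [I_sq, I_pow_three, I_pow_four] <;> ring

end WeierstrassData

theorem translator_velocity_neg_e4_general
    (Ω : Set ℂ) (hΩopen : IsOpen Ω)
    (g₁ g₂ : ℂ → ℂ)
    (hg₁ : ContDiffOn ℝ 2 g₁ Ω) (hg₂ : ContDiffOn ℝ 2 g₂ Ω)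
    (hd₁ : ∀ z ∈ Ω, ‖g₁ z‖ < 1) (hd₂ : ∀ z ∈ Ω, ‖g₂ z‖ < 1)
    (hnh₁ : ∀ z ∈ Ω, wzb g₁ z ≠ 0)
    (hCP : ∀ z ∈ Ω, CP g₁ g₂ z)
    (hGe1 : ∀ z ∈ Ω, Ge1 g₁ g₂ z)
    (X : ℂ → Fin 4 → ℝ)
    (hXz : ∀ z ∈ Ω, ∀ k : Fin 4, wzR (fun w => X w k) z = phi g₁ g₂ z k) :
    ∀ z ∈ Ω, ∀ k : Fin 4,
      (4 / (lamSq g₁ g₂ z : ℂ)) * wzb (fun w => wzR (fun w' => X w' k) w) z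
        = (((if k = 3 then (-1 : ℝ) else 0)
            + (1 / lamSq g₁ g₂ z)
              * ((fderiv ℝ (fun w => X w 3) z 1) * (fderiv ℝ (fun w => X w k) z 1)
                + (fderiv ℝ (fun w => X w 3) z Complex.I)
                    * (fderiv ℝ (fun w => X w k) z Complex.I)) : ℝ) : ℂ) := by
  intro z hz k
  have hΩz : Ω ∈ 𝓝 z := hΩopen.mem_nhds hz
  have hD := one_sub_mul_conj_ne_zero (hd₁ z hz) (hd₂ z hz)
  have hΛ : (lamSq g₁ g₂ z : ℂ) ≠ 0 := ofReal_ne_zero.2 (lamSq_ne_zero hD (hnh₁ z hz))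
  have hH := four_mul_wzb_phi (hg₁.contDiffAt hΩz)
    ((hg₂.contDiffAt hΩz).differentiableAt (by norm_num)) hD (hCP z hz) (hGe1 z hz) k
  have hXzz : wzb (fun w => wzR (fun w' => X w' k) w) z = wzb (fun w => phi g₁ g₂ w k) z :=
    Filter.EventuallyEq.wzb_eq (eventually_of_mem hΩz fun w hw => hXz w hw k)
  rw [ofReal_add, ofReal_mul, ofReal_fderiv_mul_add_eq_wzR, hXz z hz 3, hXz z hz k, hXzz]
  split_ifs at hH ⊢ <;> push_cast <;> field_simp <;> linear_combination hH

/-- **(c4): the surface is a translator with velocity `−e₄`.** If `X : Ω → ℝ⁴` satisfies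
`X_z = φ`, then its mean curvature vector `H = (4/Λ²)·X_{zz̄}` equals the projection of
`−e₄ = (0,0,0,−1)` orthogonal to the tangent plane:
`H = −e₄ + (1/Λ²)[⟨X_u, e₄⟩·X_u + ⟨X_v, e₄⟩·X_v]`. -/
theorem translator_velocity_neg_e4
    (Ω : Set ℂ) (hΩopen : IsOpen Ω) (hΩsc : SimplyConnectedSpace Ω)
    (g₁ g₂ : ℂ → ℂ)
    (hg₁ : ContDiffOn ℝ 2 g₁ Ω) (hg₂ : ContDiffOn ℝ 2 g₂ Ω)
    (hd₁ : ∀ z ∈ Ω, ‖g₁ z‖ < 1) (hd₂ : ∀ z ∈ Ω, ‖g₂ z‖ < 1)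
    (hnh₁ : ∀ z ∈ Ω, wzb g₁ z ≠ 0) (hnh₂ : ∀ z ∈ Ω, wzb g₂ z ≠ 0)
    (hCP : ∀ z ∈ Ω, CP g₁ g₂ z)
    (hGe1 : ∀ z ∈ Ω, Ge1 g₁ g₂ z)
    (X : ℂ → Fin 4 → ℝ)
    (hXreg : ∀ k : Fin 4, ContDiffOn ℝ 2 (fun w => X w k) Ω)
    (hXz : ∀ z ∈ Ω, ∀ k : Fin 4, wzR (fun w => X w k) z = phi g₁ g₂ z k) :
    ∀ z ∈ Ω, ∀ k : Fin 4,
      (4 / (lamSq g₁ g₂ z : ℂ)) * wzb (fun w => wzR (fun w' => X w' k) w) z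
        = (((if k = 3 then (-1 : ℝ) else 0)
            + (1 / lamSq g₁ g₂ z)
              * ((fderiv ℝ (fun w => X w 3) z 1) * (fderiv ℝ (fun w => X w k) z 1)
                + (fderiv ℝ (fun w => X w 3) z Complex.I)
                    * (fderiv ℝ (fun w => X w k) z Complex.I)) : ℝ) : ℂ) :=
  translator_velocity_neg_e4_general Ω hΩopen g₁ g₂ hg₁ hg₂ hd₁ hd₂ hnh₁ hCP hGe1 X hXz
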